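/- Let (Ω, F, P_0) be a probability space and let Λ_n, Λ ∈ L^1(P_0) be nonnegative random variables such that ∫ Λ_n g dP_0 → ∫ Λ g dP_0 for every bounded measurable g : Ω → ℝ (i.e. Λ_n → Λ in the weak topology σ(L^1, L^∞)). Then ∫ Λ log Λ dP_0 ≤ liminf_{n→∞} ∫ Λ_n log Λ_n dP_0, where all integrals take values in (−∞, ∞] (they are well defined since x log x ≥ −e^{−1}), i.e. the functional Λ ↦ E_0[Λ log Λ] is sequentially lower semicontinuous for the weak L^1 topology on the set of nonnegative elements of L^1(P_0). -/

import Mathlib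

/-!
On `[0, ∞)` the function `x ↦ x log x + e⁻¹` is the supremum of its tangent lines
`x ↦ x t - e^{t-1} + e⁻¹`. For bounded measurable `T`, the integral of `Λ T - e^{T-1} + e⁻¹` is
continuous in `Λ` for `σ(L¹, L∞)` and lies below the shifted entropy of `Λ`, so it is a lower
bound for the liminf. Taking for `T` a bounded truncation of `1 + log Λ` and applying Fatou's
lemma recovers the entropy of the limit.
-/

open MeasureTheory Filter Real Topology

noncomputable def entropyMinorant (t x : ℝ) : ℝ := x * t - exp (t - 1) + exp (-1)

theorem Measurable.entropyMinorant {Ω : Type*} [MeasurableSpace Ω] {f g : Ω → ℝ}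
    (hf : Measurable f) (hg : Measurable g) :
    Measurable fun ω => entropyMinorant (f ω) (g ω) := by
  unfold _root_.entropyMinorant
  fun_prop

theorem entropyMinorant_zero_left (x : ℝ) : entropyMinorant 0 x = 0 := by
  simp [entropyMinorant]

theorem entropyMinorant_le {t x : ℝ} (hx : 0 ≤ x) :
    entropyMinorant t x ≤ x * log x + exp (-1) := by
  unfold entropyMinorant
  rcases hx.eq_or_lt with rfl | hx
  · simpa using (exp_pos (t - 1)).le
  · have h := add_one_le_exp (t - 1 - log x)
    rw [exp_sub, exp_log hx, le_div_iff₀ hx] at h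
    linarith

-- Clipping before taking `log` sends `x = 0` to `-k` rather than to `log 0 = 0`, so that the
-- tangent slopes `truncLog k x + 1` still recover `x log x` at `x = 0`.
noncomputable def truncLog (k : ℕ) (x : ℝ) : ℝ := log (max (min x (exp k)) (exp (-k)))

theorem measurable_truncLog (k : ℕ) : Measurable (truncLog k) := by
  unfold truncLog
  fun_prop

theorem abs_truncLog_le (k : ℕ) (x : ℝ) : |truncLog k x| ≤ k := by
  have hlo : exp (-k) ≤ max (min x (exp k)) (exp (-k)) := le_max_right _ _
  have hhi : max (min x (exp k)) (exp (-k)) ≤ exp k :=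
    max_le (min_le_right _ _) (exp_le_exp.2 (by simp))
  rw [abs_le, truncLog, le_log_iff_exp_le ((exp_pos _).trans_le hlo),
    log_le_iff_le_exp ((exp_pos _).trans_le hlo)]
  exact ⟨hlo, hhi⟩

theorem truncLog_zero (k : ℕ) : truncLog k 0 = -k := by
  simp [truncLog, (exp_pos _).le]

theorem eventually_truncLog_eq {x : ℝ} (hx : 0 < x) : ∀ᶠ k in atTop, truncLog k x = log x := by
  obtain ⟨N, hN⟩ := exists_nat_ge |log x|
  filter_upwards [eventually_ge_atTop N] with k hk
  obtain ⟨hlo, hhi⟩ := abs_le.1 (hN.trans (Nat.cast_le.2 hk))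
  rw [truncLog, min_eq_left ((log_le_iff_le_exp hx).1 hhi),
    max_eq_left ((le_log_iff_exp_le hx).1 (by linarith))]

theorem tendsto_entropyMinorant_truncLog {x : ℝ} (hx : 0 ≤ x) :
    Tendsto (fun k : ℕ => entropyMinorant (truncLog k x + 1) x) atTop
      (𝓝 (x * log x + exp (-1))) := by
  rcases hx.eq_or_lt with rfl | hx
  · have h := tendsto_exp_neg_atTop_nhds_zero.comp tendsto_natCast_atTop_atTop
    simpa [entropyMinorant, truncLog_zero] using h.neg.add_const (exp (-1))
  · refine tendsto_const_nhds.congr' ?_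
    filter_upwards [eventually_truncLog_eq hx] with k hk
    rw [entropyMinorant, hk, add_sub_cancel_right, exp_log hx]
    ring

theorem ofReal_integral_le_lintegral_ofReal {Ω : Type*} [MeasurableSpace Ω] {μ : Measure Ω}
    {f : Ω → ℝ} (hf : Integrable f μ) :
    ENNReal.ofReal (∫ ω, f ω ∂μ) ≤ ∫⁻ ω, ENNReal.ofReal (f ω) ∂μ :=
  calc ENNReal.ofReal (∫ ω, f ω ∂μ) ≤ ENNReal.ofReal (∫ ω, max (f ω) 0 ∂μ) :=
        ENNReal.ofReal_le_ofReal (integral_mono hf hf.pos_part fun ω => le_max_left _ _)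
    _ = ∫⁻ ω, ENNReal.ofReal (max (f ω) 0) ∂μ :=
        ofReal_integral_eq_lintegral_ofReal hf.pos_part (ae_of_all _ fun ω => le_max_right _ _)
    _ = ∫⁻ ω, ENNReal.ofReal (f ω) ∂μ := by simp [ENNReal.ofReal_max]

section WeakLimit

variable {Ω : Type*} [MeasurableSpace Ω] {μ : Measure Ω} [IsFiniteMeasure μ] {f T : Ω → ℝ} {C : ℝ}

theorem integrable_exp_sub_one_of_abs_le (hT : AEStronglyMeasurable T μ)
    (hTC : ∀ ω, |T ω| ≤ C) : Integrable (fun ω => exp (T ω - 1)) μ := by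
  refine .of_bound (by fun_prop) (exp (C - 1)) (ae_of_all _ fun ω => ?_)
  rw [norm_of_nonneg (exp_pos _).le, exp_le_exp]
  linarith [(abs_le.1 (hTC ω)).2]

theorem integrable_entropyMinorant (hf : Integrable f μ) (hT : AEStronglyMeasurable T μ)
    (hTC : ∀ ω, |T ω| ≤ C) : Integrable (fun ω => entropyMinorant (T ω) (f ω)) μ :=
  ((hf.mul_bdd hT (ae_of_all _ hTC)).sub (integrable_exp_sub_one_of_abs_le hT hTC)).add
    (integrable_const _)

theorem integral_entropyMinorant (hf : Integrable f μ) (hT : AEStronglyMeasurable T μ)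
    (hTC : ∀ ω, |T ω| ≤ C) :
    ∫ ω, entropyMinorant (T ω) (f ω) ∂μ
      = ∫ ω, f ω * T ω ∂μ - ∫ ω, exp (T ω - 1) ∂μ + ∫ _, exp (-1) ∂μ := by
  have hfT : Integrable (fun ω => f ω * T ω) μ := hf.mul_bdd hT (ae_of_all _ hTC)
  have hexp := integrable_exp_sub_one_of_abs_le hT hTC
  have hsub : Integrable (fun ω => f ω * T ω - exp (T ω - 1)) μ := hfT.sub hexp
  simp only [entropyMinorant]
  rw [integral_add hsub (integrable_const _), integral_sub hfT hexp]

theorem ofReal_integral_entropyMinorant_le_liminf {Λ : ℕ → Ω → ℝ} {Λlim : Ω → ℝ}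
    (hint : ∀ n, Integrable (Λ n) μ) (hlimint : Integrable Λlim μ) (hpos : ∀ n ω, 0 ≤ Λ n ω)
    (hT : Measurable T) (hTC : ∀ ω, |T ω| ≤ C)
    (hconv : Tendsto (fun n => ∫ ω, Λ n ω * T ω ∂μ) atTop (𝓝 (∫ ω, Λlim ω * T ω ∂μ))) :
    ENNReal.ofReal (∫ ω, entropyMinorant (T ω) (Λlim ω) ∂μ)
      ≤ liminf (fun n => ∫⁻ ω, ENNReal.ofReal (Λ n ω * log (Λ n ω) + exp (-1)) ∂μ) atTop := by
  have htendsto : Tendsto (fun n => ∫ ω, entropyMinorant (T ω) (Λ n ω) ∂μ) atTop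
      (𝓝 (∫ ω, entropyMinorant (T ω) (Λlim ω) ∂μ)) := by
    simp only [integral_entropyMinorant (hint _) hT.aestronglyMeasurable hTC,
      integral_entropyMinorant hlimint hT.aestronglyMeasurable hTC]
    exact (hconv.sub_const _).add_const _
  have hle : ∀ n, ENNReal.ofReal (∫ ω, entropyMinorant (T ω) (Λ n ω) ∂μ)
      ≤ ∫⁻ ω, ENNReal.ofReal (Λ n ω * log (Λ n ω) + exp (-1)) ∂μ := fun n =>
    (ofReal_integral_le_lintegral_ofReal
      (integrable_entropyMinorant (hint n) hT.aestronglyMeasurable hTC)).trans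
      (lintegral_mono fun ω => ENNReal.ofReal_le_ofReal (entropyMinorant_le (hpos n ω)))
  calc ENNReal.ofReal (∫ ω, entropyMinorant (T ω) (Λlim ω) ∂μ)
      = liminf (fun n => ENNReal.ofReal (∫ ω, entropyMinorant (T ω) (Λ n ω) ∂μ)) atTop :=
        ((ENNReal.continuous_ofReal.tendsto _).comp htendsto).liminf_eq.symm
    _ ≤ _ := liminf_le_liminf (Eventually.of_forall hle)

theorem lintegral_entropyMinorant_le_liminf {Λ : ℕ → Ω → ℝ} {Λlim : Ω → ℝ}
    (hint : ∀ n, Integrable (Λ n) μ) (hlimint : Integrable Λlim μ)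
    (hlimmeas : Measurable Λlim) (hpos : ∀ n ω, 0 ≤ Λ n ω)
    (hT : Measurable T) (hTC : ∀ ω, |T ω| ≤ C)
    (hconv : ∀ g : Ω → ℝ, Measurable g → (∃ C, ∀ ω, |g ω| ≤ C) →
      Tendsto (fun n => ∫ ω, Λ n ω * g ω ∂μ) atTop (𝓝 (∫ ω, Λlim ω * g ω ∂μ))) :
    ∫⁻ ω, ENNReal.ofReal (entropyMinorant (T ω) (Λlim ω)) ∂μ
      ≤ liminf (fun n => ∫⁻ ω, ENNReal.ofReal (Λ n ω * log (Λ n ω) + exp (-1)) ∂μ) atTop := by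
  -- Since `entropyMinorant 0 = 0`, switching to `T = 0` where the integrand is negative
  -- replaces the integrand by its positive part, whose `∫⁻` is an ordinary integral.
  set T' : Ω → ℝ := fun ω => if 0 ≤ entropyMinorant (T ω) (Λlim ω) then T ω else 0
  have hT' : Measurable T' :=
    Measurable.ite (measurableSet_le measurable_const (hT.entropyMinorant hlimmeas))
      hT measurable_const
  have hT'C : ∀ ω, |T' ω| ≤ C := fun ω => by
    by_cases h : 0 ≤ entropyMinorant (T ω) (Λlim ω) <;> simp only [T', h, if_true, if_false]
    exacts [hTC ω, by simpa using (abs_nonneg _).trans (hTC ω)]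
  have hT'_eq : ∀ ω, entropyMinorant (T' ω) (Λlim ω) = max (entropyMinorant (T ω) (Λlim ω)) 0 :=
    fun ω => by
      by_cases h : 0 ≤ entropyMinorant (T ω) (Λlim ω)
      · simp only [T', h, if_true, max_eq_left]
      · simp only [T', h, if_false, entropyMinorant_zero_left, max_eq_right (not_le.1 h).le]
  calc ∫⁻ ω, ENNReal.ofReal (entropyMinorant (T ω) (Λlim ω)) ∂μ
      = ∫⁻ ω, ENNReal.ofReal (entropyMinorant (T' ω) (Λlim ω)) ∂μ := by
        simp [hT'_eq, ENNReal.ofReal_max]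
    _ = ENNReal.ofReal (∫ ω, entropyMinorant (T' ω) (Λlim ω) ∂μ) :=
        (ofReal_integral_eq_lintegral_ofReal
          (integrable_entropyMinorant hlimint hT'.aestronglyMeasurable hT'C)
          (ae_of_all _ fun ω => (le_max_right _ _).trans (hT'_eq ω).ge)).symm
    _ ≤ _ := ofReal_integral_entropyMinorant_le_liminf hint hlimint hpos hT' hT'C
        (hconv T' hT' ⟨C, hT'C⟩)

end WeakLimit

theorem stmt10_general {Ω : Type*} [m0 : MeasurableSpace Ω] (P₀ : Measure Ω) [IsProbabilityMeasure P₀]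
    (Λ : ℕ → Ω → ℝ) (Λlim : Ω → ℝ)
    (hlimmeas : Measurable Λlim)
    (hint : ∀ n, Integrable (Λ n) P₀) (hlimint : Integrable Λlim P₀)
    (hpos : ∀ n ω, 0 ≤ Λ n ω) (hlimpos : ∀ ω, 0 ≤ Λlim ω)
    (hconv : ∀ g : Ω → ℝ, Measurable g → (∃ C, ∀ ω, |g ω| ≤ C) →
      Tendsto (fun n => ∫ ω, Λ n ω * g ω ∂P₀) atTop (nhds (∫ ω, Λlim ω * g ω ∂P₀))) :
    (∫⁻ ω, ENNReal.ofReal (Λlim ω * Real.log (Λlim ω) + Real.exp (-1)) ∂P₀)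
      ≤ liminf
          (fun n => ∫⁻ ω, ENNReal.ofReal (Λ n ω * Real.log (Λ n ω) + Real.exp (-1)) ∂P₀)
          atTop := by
  set T : ℕ → Ω → ℝ := fun k ω => truncLog k (Λlim ω) + 1
  have hT : ∀ k, Measurable (T k) := fun k => ((measurable_truncLog k).comp hlimmeas).add_const 1
  have hTC : ∀ k ω, |T k ω| ≤ k + 1 := fun k ω =>
    (abs_add_le _ _).trans (by simpa using abs_truncLog_le k (Λlim ω))
  calc (∫⁻ ω, ENNReal.ofReal (Λlim ω * log (Λlim ω) + exp (-1)) ∂P₀)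
      = ∫⁻ ω, liminf (fun k => ENNReal.ofReal (entropyMinorant (T k ω) (Λlim ω))) atTop ∂P₀ :=
        lintegral_congr fun ω => ((ENNReal.continuous_ofReal.tendsto _).comp
          (tendsto_entropyMinorant_truncLog (hlimpos ω))).liminf_eq.symm
    _ ≤ liminf (fun k => ∫⁻ ω, ENNReal.ofReal (entropyMinorant (T k ω) (Λlim ω)) ∂P₀) atTop :=
        lintegral_liminf_le fun k => ((hT k).entropyMinorant hlimmeas).ennreal_ofReal
    _ ≤ _ := liminf_le_liminf (Eventually.of_forall fun k =>
        lintegral_entropyMinorant_le_liminf hint hlimint hlimmeas hpos (hT k) (hTC k) hconv)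
    _ = _ := liminf_const _

/-- The entropy functional `Λ ↦ E₀[Λ log Λ]` is sequentially lower
semicontinuous for the weak topology `σ(L¹, L∞)` on nonnegative elements of `L¹(P₀)`.
Since `E₀[Λ log Λ]` takes values in `(-∞, ∞]`, it is encoded (shifting by the constant
`e⁻¹`, using `x log x ≥ -e⁻¹`) as the `ℝ≥0∞`-valued functional
`Λ ↦ ∫⁻ ENNReal.ofReal (Λ log Λ + e⁻¹) dP₀`; the stated inequality is equivalent to
`∫ Λ log Λ dP₀ ≤ liminf ∫ Λₙ log Λₙ dP₀` in `(-∞, ∞]`. -/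
theorem stmt10 {Ω : Type*} [m0 : MeasurableSpace Ω] (P₀ : Measure Ω) [IsProbabilityMeasure P₀]
    (Λ : ℕ → Ω → ℝ) (Λlim : Ω → ℝ)
    (hmeas : ∀ n, Measurable (Λ n)) (hlimmeas : Measurable Λlim)
    (hint : ∀ n, Integrable (Λ n) P₀) (hlimint : Integrable Λlim P₀)
    (hpos : ∀ n ω, 0 ≤ Λ n ω) (hlimpos : ∀ ω, 0 ≤ Λlim ω)
    (hconv : ∀ g : Ω → ℝ, Measurable g → (∃ C, ∀ ω, |g ω| ≤ C) →
      Tendsto (fun n => ∫ ω, Λ n ω * g ω ∂P₀) atTop (nhds (∫ ω, Λlim ω * g ω ∂P₀))) :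
    (∫⁻ ω, ENNReal.ofReal (Λlim ω * Real.log (Λlim ω) + Real.exp (-1)) ∂P₀)
      ≤ liminf
          (fun n => ∫⁻ ω, ENNReal.ofReal (Λ n ω * Real.log (Λ n ω) + Real.exp (-1)) ∂P₀)
          atTop :=
  stmt10_general (m0 := m0) P₀ Λ Λlim hlimmeas hint hlimint hpos hlimpos hconv
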